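/- Let M be a subset of the simple transpositions {s_1,…,s_{n−1}} and W_M ⊆ S_n the subgroup they generate. Let u_1,…,u_m ∈ W_M, let g_1,…,g_m ∈ ℤ[ε_1,…,ε_n] be homogeneous with deg(g_1)+⋯+deg(g_m) = ℓ(u_1)+⋯+ℓ(u_m), let h ∈ ℤ[ε_1,…,ε_n] be W_M-invariant and homogeneous of degree > 0, and let g' ∈ ℤ[ε_1,…,ε_n] be homogeneous with deg(h) + deg(g') = deg(g_m). Then ∂_{u_1}(g_1·∂_{u_2}(g_2·⋯·∂_{u_m}(g_m + h·g')⋯)) = ∂_{u_1}(g_1·∂_{u_2}(g_2·⋯·∂_{u_m}(g_m)⋯)). -/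

import Mathlib

/-!
Divided differences are additive and satisfy `∂ᵢ(p f) = p ∂ᵢ f` whenever `sᵢ p = p`. For `i ∉ M`
every element of `W_M` maps `{0, …, i}` onto itself, which no element having a reduced word
through `sᵢ` does; so reduced words of elements of `W_M` only use letters of `M`. Hence the
nested expression is additive in its innermost argument and the `W_M`-invariant `h` can be pulled
out of every divided difference, leaving `h · ∂_{u₁}(g₁ ⋯ ∂_{u_m}(g')⋯)`. This vanishes for degree
reasons: each `∂ᵢ` lowers the degree by one and kills constants, while the innermost argument
has total degree `Σ deg gᵢ + deg g' < Σ ℓ(uᵢ)`.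
-/

open MvPolynomial

/-- The adjacent transposition swapping `i` and `i+1` (0-indexed). -/
def sT (n : ℕ) (i : ℕ) : Equiv.Perm (Fin n) :=
  if h : i + 1 < n then Equiv.swap ⟨i, Nat.lt_of_succ_lt h⟩ ⟨i + 1, h⟩ else 1

/-- Product of a word in the simple transpositions. -/
def wordProd (n : ℕ) (l : List ℕ) : Equiv.Perm (Fin n) := (l.map (sT n)).prod

/-- Number of inversions = Coxeter length. -/
def invLen {n : ℕ} (w : Equiv.Perm (Fin n)) : ℕ :=
  (Finset.univ.filter fun p : Fin n × Fin n => p.1 < p.2 ∧ w p.2 < w p.1).card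

open Classical in
/-- The divided difference operator. -/
noncomputable def dd (n : ℕ) (i : ℕ) (f : MvPolynomial (Fin n) ℤ) : MvPolynomial (Fin n) ℤ :=
  if h : i + 1 < n then
    if hd : ∃ g : MvPolynomial (Fin n) ℤ,
        f - rename (⇑(sT n i)) f = (X ⟨i, Nat.lt_of_succ_lt h⟩ - X ⟨i + 1, h⟩) * g
    then hd.choose else 0
  else 0

open Classical in
noncomputable def ddList (n : ℕ) : List ℕ → MvPolynomial (Fin n) ℤ → MvPolynomial (Fin n) ℤ
  | [], f => f
  | i :: t, f => dd n i (ddList n t f)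

def IsReducedWord (n : ℕ) (l : List ℕ) (w : Equiv.Perm (Fin n)) : Prop :=
  (∀ i ∈ l, i + 1 < n) ∧ wordProd n l = w ∧ l.length = invLen w

noncomputable def nest (n : ℕ) :
    List (List ℕ) → List (MvPolynomial (Fin n) ℤ) → MvPolynomial (Fin n) ℤ
  | [], _ => 1
  | _ :: _, [] => 1
  | l :: ls, g :: gs => ddList n l (g * nest n ls gs)

noncomputable def xv (n j : ℕ) : MvPolynomial (Fin n) ℤ := if h : j < n then X ⟨j, h⟩ else 0


namespace MvPolynomial

variable {σ R : Type*}

lemma IsHomogeneous.homogeneousComponent_add_mul [CommSemiring R] {φ : MvPolynomial σ R} {m : ℕ}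
    (hφ : φ.IsHomogeneous m) (k : ℕ) (ψ : MvPolynomial σ R) :
    homogeneousComponent (m + k) (φ * ψ) = φ * homogeneousComponent k ψ := by
  have hterm : ∀ j, homogeneousComponent (m + k) (φ * homogeneousComponent j ψ) =
      if k = j then φ * homogeneousComponent j ψ else 0 := fun j => by
    rw [homogeneousComponent_of_mem (hφ.mul (homogeneousComponent_isHomogeneous j ψ))]
    simp
  conv_lhs => rw [← sum_homogeneousComponent ψ, Finset.mul_sum, map_sum]
  simp_rw [hterm, Finset.sum_ite_eq, Finset.mem_range]
  split_ifs with hk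
  · rfl
  · rw [homogeneousComponent_eq_zero _ _ (by omega), mul_zero]

lemma IsHomogeneous.of_mul_left [CommRing R] [IsDomain R] {φ ψ : MvPolynomial σ R} {m k : ℕ}
    (hφ : φ.IsHomogeneous m) (hφ0 : φ ≠ 0) (h : (φ * ψ).IsHomogeneous (m + k)) :
    ψ.IsHomogeneous k := by
  intro d hd
  rw [Pi.one_def, ← Finsupp.degree_eq_weight_one]
  by_contra hdk
  have hcomp := hφ.homogeneousComponent_add_mul d.degree ψ
  rw [homogeneousComponent_of_mem h, if_neg (by omega)] at hcomp
  have hzero := congrArg (coeff d) ((mul_eq_zero.1 hcomp.symm).resolve_left hφ0)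
  simp [coeff_homogeneousComponent] at hzero
  exact hd hzero

lemma X_sub_X_dvd_sub_rename_swap [CommRing R] [DecidableEq σ] (i j : σ) (f : MvPolynomial σ R) :
    X i - X j ∣ f - rename (Equiv.swap i j) f := by
  let q := Ideal.Quotient.mkₐ R (Ideal.span {(X i - X j : MvPolynomial σ R)})
  have hij : q (X i) = q (X j) := by
    rw [Ideal.Quotient.mkₐ_eq_mk, Ideal.Quotient.eq, Ideal.mem_span_singleton]
  have hq : q.comp (rename (Equiv.swap i j)) = q := by
    refine algHom_ext fun k => ?_
    simp only [AlgHom.comp_apply, rename_X, Equiv.swap_apply_def]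
    split_ifs <;> simp_all
  rw [← Ideal.mem_span_singleton, ← Ideal.Quotient.eq, ← Ideal.Quotient.mkₐ_eq_mk R]
  exact (congrArg (· f) hq).symm

end MvPolynomial

section DividedDifference

variable {n i : ℕ}

lemma sT_eq_swap (h : i + 1 < n) : sT n i = Equiv.swap ⟨i, Nat.lt_of_succ_lt h⟩ ⟨i + 1, h⟩ :=
  dif_pos h

lemma sT_mul_self : sT n i * sT n i = 1 := by
  by_cases h : i + 1 < n
  · rw [sT_eq_swap h, Equiv.swap_mul_self]
  · rw [sT, dif_neg h, one_mul]

lemma X_sub_X_succ_ne_zero (h : i + 1 < n) :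
    (X ⟨i, Nat.lt_of_succ_lt h⟩ - X ⟨i + 1, h⟩ : MvPolynomial (Fin n) ℤ) ≠ 0 :=
  sub_ne_zero.2 <| X_injective.ne (by simp [Fin.ext_iff])

lemma dd_spec (h : i + 1 < n) (f : MvPolynomial (Fin n) ℤ) :
    f - rename (sT n i) f = (X ⟨i, Nat.lt_of_succ_lt h⟩ - X ⟨i + 1, h⟩) * dd n i f := by
  have hdvd : ∃ g, f - rename (sT n i) f = (X ⟨i, Nat.lt_of_succ_lt h⟩ - X ⟨i + 1, h⟩) * g := by
    rw [sT_eq_swap h]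
    exact X_sub_X_dvd_sub_rename_swap _ _ f
  rw [dd, dif_pos h, dif_pos hdvd]
  exact hdvd.choose_spec

lemma dd_of_not_lt (h : ¬ i + 1 < n) (f : MvPolynomial (Fin n) ℤ) : dd n i f = 0 :=
  dif_neg h

lemma dd_eq_of_sub_rename_eq (h : i + 1 < n) {f g : MvPolynomial (Fin n) ℤ}
    (hg : f - rename (sT n i) f = (X ⟨i, Nat.lt_of_succ_lt h⟩ - X ⟨i + 1, h⟩) * g) :
    dd n i f = g :=
  mul_left_cancel₀ (X_sub_X_succ_ne_zero h) ((dd_spec h f).symm.trans hg)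

lemma dd_add (f g : MvPolynomial (Fin n) ℤ) : dd n i (f + g) = dd n i f + dd n i g := by
  by_cases h : i + 1 < n
  · refine dd_eq_of_sub_rename_eq h ?_
    rw [map_add, mul_add, ← dd_spec h, ← dd_spec h]
    ring
  · simp only [dd_of_not_lt h, add_zero]

lemma dd_eq_zero_of_rename_eq {f : MvPolynomial (Fin n) ℤ} (hf : rename (sT n i) f = f) :
    dd n i f = 0 := by
  by_cases h : i + 1 < n
  · exact dd_eq_of_sub_rename_eq h (by rw [hf, sub_self, mul_zero])
  · exact dd_of_not_lt h f

lemma dd_zero : dd n i 0 = 0 :=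
  dd_eq_zero_of_rename_eq (map_zero _)

lemma dd_mul_of_rename_eq {p : MvPolynomial (Fin n) ℤ} (hp : rename (sT n i) p = p)
    (f : MvPolynomial (Fin n) ℤ) : dd n i (p * f) = p * dd n i f := by
  by_cases h : i + 1 < n
  · refine dd_eq_of_sub_rename_eq h ?_
    rw [map_mul, hp, ← mul_sub, dd_spec h]
    ring
  · simp only [dd_of_not_lt h, mul_zero]

lemma dd_isHomogeneous {f : MvPolynomial (Fin n) ℤ} {e : ℕ} (hf : f.IsHomogeneous (e + 1)) :
    (dd n i f).IsHomogeneous e := by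
  by_cases h : i + 1 < n
  · refine ((isHomogeneous_X ℤ _).sub (isHomogeneous_X ℤ _)).of_mul_left
      (X_sub_X_succ_ne_zero h) ?_
    rw [← dd_spec h, add_comm]
    exact hf.sub hf.rename_isHomogeneous
  · rw [dd_of_not_lt h]
    exact isHomogeneous_zero _ _ _

lemma dd_eq_zero_of_isHomogeneous_zero {f : MvPolynomial (Fin n) ℤ} (hf : f.IsHomogeneous 0) :
    dd n i f = 0 := by
  rw [totalDegree_eq_zero_iff_eq_C.1 ((totalDegree_zero_iff_isHomogeneous _).2 hf)]
  exact dd_eq_zero_of_rename_eq (rename_C _ _)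

end DividedDifference

section Nested

variable {n : ℕ}

lemma ddList_add (l : List ℕ) (f g : MvPolynomial (Fin n) ℤ) :
    ddList n l (f + g) = ddList n l f + ddList n l g := by
  induction l with
  | nil => rfl
  | cons a t ih => simp only [ddList, ih, dd_add]

lemma ddList_zero (l : List ℕ) : ddList n l 0 = 0 := by
  induction l with
  | nil => rfl
  | cons a t ih => simp only [ddList, ih, dd_zero]

lemma ddList_mul_of_rename_eq {l : List ℕ} {p : MvPolynomial (Fin n) ℤ}
    (hp : ∀ a ∈ l, rename (sT n a) p = p) (f : MvPolynomial (Fin n) ℤ) :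
    ddList n l (p * f) = p * ddList n l f := by
  induction l with
  | nil => rfl
  | cons a t ih =>
    simp only [ddList, ih fun b hb => hp b (List.mem_cons_of_mem a hb),
      dd_mul_of_rename_eq (hp a List.mem_cons_self)]

lemma ddList_isHomogeneous {l : List ℕ} {f : MvPolynomial (Fin n) ℤ} {e : ℕ}
    (hf : f.IsHomogeneous (e + l.length)) : (ddList n l f).IsHomogeneous e := by
  induction l generalizing e with
  | nil => exact hf
  | cons a t ih =>
    exact dd_isHomogeneous (ih (by rwa [List.length_cons, ← add_assoc, add_right_comm] at hf))

lemma ddList_eq_zero_of_isHomogeneous {l : List ℕ} {f : MvPolynomial (Fin n) ℤ} {d : ℕ}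
    (hf : f.IsHomogeneous d) (hd : d < l.length) : ddList n l f = 0 := by
  induction l with
  | nil => simp at hd
  | cons a t ih =>
    rcases (Nat.lt_succ_iff.1 hd).lt_or_eq with hlt | rfl
    · simp only [ddList, ih hlt, dd_zero]
    · exact dd_eq_zero_of_isHomogeneous_zero (ddList_isHomogeneous (by rwa [zero_add]))

lemma nest_append_add {ls : List (List ℕ)} {gs : List (MvPolynomial (Fin n) ℤ)}
    (hlen : ls.length = gs.length + 1) (x y : MvPolynomial (Fin n) ℤ) :
    nest n ls (gs ++ [x + y]) = nest n ls (gs ++ [x]) + nest n ls (gs ++ [y]) := by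
  induction gs generalizing ls with
  | nil =>
    obtain ⟨l, rfl⟩ := List.length_eq_one_iff.1 hlen
    simp only [List.nil_append, nest, add_mul, ddList_add]
  | cons g gs ih =>
    obtain ⟨l, ls, rfl⟩ := List.exists_cons_of_length_eq_add_one hlen
    simp only [List.cons_append, nest, ih (Nat.succ_injective hlen), mul_add, ddList_add]

lemma nest_append_mul_of_rename_eq {ls : List (List ℕ)} {gs : List (MvPolynomial (Fin n) ℤ)}
    (hlen : ls.length = gs.length + 1) {p : MvPolynomial (Fin n) ℤ}
    (hp : ∀ l ∈ ls, ∀ a ∈ l, rename (sT n a) p = p) (f : MvPolynomial (Fin n) ℤ) :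
    nest n ls (gs ++ [p * f]) = p * nest n ls (gs ++ [f]) := by
  induction gs generalizing ls with
  | nil =>
    obtain ⟨l, rfl⟩ := List.length_eq_one_iff.1 hlen
    simp only [List.nil_append, nest, mul_assoc, ddList_mul_of_rename_eq (hp l (by simp))]
  | cons g gs ih =>
    obtain ⟨l, ls, rfl⟩ := List.exists_cons_of_length_eq_add_one hlen
    simp only [List.cons_append, nest,
      ih (Nat.succ_injective hlen) fun l' hl' => hp l' (List.mem_cons_of_mem l hl'),
      mul_left_comm g p, ddList_mul_of_rename_eq (hp l List.mem_cons_self)]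

-- The two parts are proved jointly: the truncated degree is only right because an inner
-- factor whose degree is too small vanishes.
lemma nest_isHomogeneous {ls : List (List ℕ)} {gs : List (MvPolynomial (Fin n) ℤ)}
    {ds : List ℕ} (hgs : List.Forall₂ (fun g d => g.IsHomogeneous d) gs ds)
    (hlen : ls.length = gs.length) :
    (nest n ls gs).IsHomogeneous (ds.sum - (ls.map List.length).sum) ∧
      (ds.sum < (ls.map List.length).sum → nest n ls gs = 0) := by
  induction hgs generalizing ls with
  | nil =>
    rw [List.length_eq_zero_iff.1 hlen]
    exact ⟨isHomogeneous_one _ _, by simp⟩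
  | @cons g d gs ds hg _ ih =>
    obtain ⟨l, ls, rfl⟩ := List.exists_cons_of_length_eq_add_one hlen
    obtain ⟨hinner, hvanish⟩ := ih (Nat.succ_injective hlen)
    simp only [nest, List.map_cons, List.sum_cons]
    generalize (ls.map List.length).sum = L at hinner hvanish ⊢
    by_cases hlt : ds.sum < L
    · simp only [hvanish hlt, mul_zero, ddList_zero, isHomogeneous_zero, implies_true, and_self]
    have hprod := hg.mul hinner
    by_cases hlt' : d + ds.sum < l.length + L
    · rw [ddList_eq_zero_of_isHomogeneous hprod (by omega)]
      exact ⟨isHomogeneous_zero _ _ _, fun _ => rfl⟩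
    · exact ⟨ddList_isHomogeneous (by convert hprod using 1; omega), fun h => absurd h hlt'⟩

end Nested

section ReducedWords

variable {n : ℕ}

lemma swap_lt_swap_iff_of_succ_eq {u u' x y : Fin n} (hu : (u : ℕ) + 1 = u')
    (hxy : ¬(x = u ∧ y = u')) (hyx : ¬(x = u' ∧ y = u)) :
    Equiv.swap u u' x < Equiv.swap u u' y ↔ x < y := by
  simp only [Equiv.swap_apply_def]
  rw [Fin.lt_def, Fin.lt_def]
  split_ifs <;> simp_all [Fin.ext_iff] <;> omega

lemma invLen_sT_mul_of_lt {a : ℕ} (h : a + 1 < n) {v : Equiv.Perm (Fin n)}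
    (hv : v⁻¹ ⟨a, Nat.lt_of_succ_lt h⟩ < v⁻¹ ⟨a + 1, h⟩) :
    invLen (sT n a * v) = invLen v + 1 := by
  set u : Fin n := ⟨a, Nat.lt_of_succ_lt h⟩
  set u' : Fin n := ⟨a + 1, h⟩
  have huu' : u < u' := Fin.lt_def.2 (Nat.lt_succ_self a)
  have hs : sT n a = Equiv.swap u u' := sT_eq_swap h
  -- `sT n a` swaps the adjacent values `a, a + 1`, so it reverses the order of exactly one pair
  -- of positions, namely `(v⁻¹ a, v⁻¹ (a + 1))`.
  have hinversions :
      (Finset.univ.filter fun p : Fin n × Fin n => p.1 < p.2 ∧ (sT n a * v) p.2 < (sT n a * v) p.1)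
        = insert (v⁻¹ u, v⁻¹ u')
          (Finset.univ.filter fun p : Fin n × Fin n => p.1 < p.2 ∧ v p.2 < v p.1) := by
    ext ⟨p, q⟩
    simp only [Finset.mem_insert, Finset.mem_filter, Finset.mem_univ, true_and, Prod.mk.injEq,
      Equiv.Perm.eq_inv_iff_eq, hs, Equiv.Perm.mul_apply]
    by_cases hpq : v p = u ∧ v q = u'
    · obtain rfl := Equiv.Perm.eq_inv_iff_eq.2 hpq.1
      obtain rfl := Equiv.Perm.eq_inv_iff_eq.2 hpq.2
      simp only [Equiv.Perm.coe_inv, Equiv.apply_symm_apply, Equiv.swap_apply_left,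
        Equiv.swap_apply_right]
      tauto
    by_cases hqp : v p = u' ∧ v q = u
    · obtain rfl := Equiv.Perm.eq_inv_iff_eq.2 hqp.1
      obtain rfl := Equiv.Perm.eq_inv_iff_eq.2 hqp.2
      simp only [Equiv.Perm.coe_inv, Equiv.apply_symm_apply, Equiv.swap_apply_left,
        Equiv.swap_apply_right]
      rw [Equiv.Perm.coe_inv] at hv
      simp [hv.not_gt, huu'.ne']
    rw [swap_lt_swap_iff_of_succ_eq rfl (by tauto) (by tauto)]
    tauto
  rw [invLen, invLen, hinversions, Finset.card_insert_of_notMem]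
  simp [huu'.le]

lemma invLen_sT_mul_of_gt {a : ℕ} (h : a + 1 < n) {v : Equiv.Perm (Fin n)}
    (hv : v⁻¹ ⟨a + 1, h⟩ < v⁻¹ ⟨a, Nat.lt_of_succ_lt h⟩) :
    invLen v = invLen (sT n a * v) + 1 := by
  have key := invLen_sT_mul_of_lt h (v := sT n a * v) (by
    simpa only [mul_inv_rev, sT_eq_swap h, Equiv.swap_inv, Equiv.Perm.mul_apply,
      Equiv.swap_apply_left, Equiv.swap_apply_right] using hv)
  rwa [← mul_assoc, sT_mul_self, one_mul] at key

lemma inv_apply_ne_inv_apply_succ {a : ℕ} (h : a + 1 < n) (v : Equiv.Perm (Fin n)) :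
    v⁻¹ ⟨a, Nat.lt_of_succ_lt h⟩ ≠ v⁻¹ ⟨a + 1, h⟩ :=
  v⁻¹.injective.ne (by simp [Fin.ext_iff])

lemma invLen_sT_mul_le (a : ℕ) (v : Equiv.Perm (Fin n)) :
    invLen (sT n a * v) ≤ invLen v + 1 := by
  by_cases h : a + 1 < n
  · rcases lt_or_gt_of_ne (inv_apply_ne_inv_apply_succ h v) with hlt | hgt
    · exact (invLen_sT_mul_of_lt h hlt).le
    · have := invLen_sT_mul_of_gt h hgt
      omega
  · rw [sT, dif_neg h, one_mul]
    omega

lemma wordProd_cons (a : ℕ) (t : List ℕ) : wordProd n (a :: t) = sT n a * wordProd n t := by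
  rw [wordProd, List.map_cons, List.prod_cons, wordProd]

lemma invLen_wordProd_le (l : List ℕ) : invLen (wordProd n l) ≤ l.length := by
  induction l with
  | nil =>
    simp only [wordProd, invLen, List.map_nil, List.prod_nil, Equiv.Perm.one_apply,
      List.length_nil, Nat.le_zero, Finset.card_eq_zero, Finset.filter_eq_empty_iff]
    exact fun p _ hp => lt_asymm hp.1 hp.2
  | cons a t ih =>
    rw [wordProd_cons, List.length_cons]
    exact (invLen_sT_mul_le a _).trans (Nat.succ_le_succ ih)

def segmentStabilizer (n i : ℕ) : Subgroup (Equiv.Perm (Fin n)) where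
  carrier := {w | ∀ p : Fin n, (w p : ℕ) ≤ i ↔ (p : ℕ) ≤ i}
  mul_mem' hw hv p := (hw _).trans (hv p)
  one_mem' _ := Iff.rfl
  inv_mem' {w} hw p := by simpa using (hw (w⁻¹ p)).symm

lemma sT_mem_segmentStabilizer {a i : ℕ} (hai : a ≠ i) : sT n a ∈ segmentStabilizer n i := by
  intro p
  by_cases h : a + 1 < n
  · rw [sT_eq_swap h, Equiv.swap_apply_def]
    split_ifs <;> simp_all [Fin.ext_iff] <;> omega
  · simp [sT, h]

lemma closure_le_segmentStabilizer {M : Set ℕ} {i : ℕ} (hi : i ∉ M) :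
    Subgroup.closure (sT n '' M) ≤ segmentStabilizer n i :=
  (Subgroup.closure_le _).2 <| by
    rintro _ ⟨a, ha, rfl⟩
    exact sT_mem_segmentStabilizer (ne_of_mem_of_not_mem ha hi)

lemma IsReducedWord.notMem_of_mem_segmentStabilizer {l : List ℕ} {w : Equiv.Perm (Fin n)}
    (hw : IsReducedWord n l w) {i : ℕ} (hwi : w ∈ segmentStabilizer n i) : i ∉ l := by
  induction l generalizing w with
  | nil => simp
  | cons a t ih =>
    obtain ⟨hl, rfl, hlen⟩ := hw
    have h : a + 1 < n := hl a List.mem_cons_self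
    have hvlen := invLen_wordProd_le (n := n) t
    rw [wordProd_cons] at hlen hwi
    generalize hvt : wordProd n t = v at hlen hwi hvlen
    have hv : v⁻¹ ⟨a, Nat.lt_of_succ_lt h⟩ < v⁻¹ ⟨a + 1, h⟩ := by
      refine (lt_or_gt_of_ne (inv_apply_ne_inv_apply_succ h v)).resolve_right fun hgt => ?_
      have := invLen_sT_mul_of_gt h hgt
      simp only [List.length_cons] at hlen
      omega
    have ht : IsReducedWord n t v := by
      refine ⟨fun b hb => hl b (List.mem_cons_of_mem a hb), hvt, ?_⟩
      rw [invLen_sT_mul_of_lt h hv, List.length_cons] at hlen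
      omega
    have hai : i ≠ a := by
      rintro rfl
      -- `w⁻¹ (i + 1) = v⁻¹ i < v⁻¹ (i + 1) = w⁻¹ i ≤ i`, although `w⁻¹` preserves `{0, …, i}`
      have h1 := (inv_mem hwi) ⟨i, Nat.lt_of_succ_lt h⟩
      have h2 := (inv_mem hwi) ⟨i + 1, h⟩
      simp only [mul_inv_rev, sT_eq_swap h, Equiv.swap_inv, Equiv.Perm.mul_apply,
        Equiv.swap_apply_left, Equiv.swap_apply_right] at h1 h2
      rw [Fin.lt_def] at hv
      omega
    have hvi : v ∈ segmentStabilizer n i := by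
      simpa [← mul_assoc, sT_mul_self] using mul_mem (sT_mem_segmentStabilizer hai.symm) hwi
    simpa [hai] using ih ht hvi

lemma IsReducedWord.mem_of_mem_closure {l : List ℕ} {u : Equiv.Perm (Fin n)}
    (hl : IsReducedWord n l u) {M : Set ℕ} (hu : u ∈ Subgroup.closure (sT n '' M)) {a : ℕ}
    (ha : a ∈ l) : a ∈ M := by
  by_contra haM
  exact hl.notMem_of_mem_segmentStabilizer (closure_le_segmentStabilizer haM hu) ha

end ReducedWords

lemma List.Forall₂.exists_mem_right {α β : Type*} {R : α → β → Prop} {l₁ : List α}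
    {l₂ : List β} (h : List.Forall₂ R l₁ l₂) {a : α} (ha : a ∈ l₁) : ∃ b ∈ l₂, R a b := by
  induction h with
  | nil => simp at ha
  | @cons x y _ _ hxy _ ih =>
    rcases List.mem_cons.1 ha with rfl | ha
    · exact ⟨y, List.mem_cons_self, hxy⟩
    · obtain ⟨b, hb, hab⟩ := ih ha
      exact ⟨b, List.mem_cons_of_mem y hb, hab⟩

theorem stmt7_general (n : ℕ) (M : Set ℕ)
    (us : List (Equiv.Perm (Fin n))) (ls : List (List ℕ))
    (hus : ∀ u ∈ us, u ∈ Subgroup.closure ((fun i => sT n i) '' M))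
    (hred : List.Forall₂ (fun l u => IsReducedWord n l u) ls us)
    (gs : List (MvPolynomial (Fin n) ℤ)) (ds : List ℕ)
    (hhom : List.Forall₂ (fun g d => MvPolynomial.IsHomogeneous g d) gs ds)
    (gm : MvPolynomial (Fin n) ℤ) (dm : ℕ)
    (hglen : gs.length + 1 = us.length)
    (hsum : ds.sum + dm = (us.map invLen).sum)
    (h : MvPolynomial (Fin n) ℤ) (dh : ℕ) (hdh : 0 < dh)
    (hinv : ∀ u ∈ Subgroup.closure ((fun i => sT n i) '' M), rename (⇑u) h = h)
    (g' : MvPolynomial (Fin n) ℤ) (d' : ℕ) (hg' : g'.IsHomogeneous d')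
    (hdeg : dh + d' = dm) :
    nest n ls (gs ++ [gm + h * g']) = nest n ls (gs ++ [gm]) := by
  have hlen : ls.length = gs.length + 1 := hred.length_eq.trans hglen.symm
  have hwords : ls.map List.length = us.map invLen := by
    rw [← List.forall₂_eq_eq_eq, List.forall₂_map_left_iff, List.forall₂_map_right_iff]
    exact hred.imp fun _ _ hlu => hlu.2.2
  have hletters : ∀ l ∈ ls, ∀ a ∈ l, rename (sT n a) h = h := fun l hl a ha => by
    obtain ⟨u, hu, hlu⟩ := hred.exists_mem_right hl
    exact hinv _ (Subgroup.subset_closure ⟨a, hlu.mem_of_mem_closure (hus u hu) ha, rfl⟩)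
  have hvanish : nest n ls (gs ++ [g']) = 0 := by
    refine (nest_isHomogeneous (List.rel_append hhom (.cons hg' .nil)) (by simp [hlen])).2 ?_
    simp only [List.sum_append, List.sum_cons, List.sum_nil, hwords]
    omega
  rw [nest_append_add hlen, nest_append_mul_of_rename_eq hlen hletters, hvanish, mul_zero,
    add_zero]

/-- with `u_1,…,u_m ∈ W_M`, `g_i` homogeneous with total degree equal to
`Σ ℓ(u_i)`, `h` a `W_M`-invariant homogeneous polynomial of positive degree and `g'`
homogeneous with `deg h + deg g' = deg g_m`, one has
`∂_{u_1}(g_1·⋯·∂_{u_m}(g_m + h·g')⋯) = ∂_{u_1}(g_1·⋯·∂_{u_m}(g_m)⋯)`. -/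
theorem stmt7 (n : ℕ) (M : Set ℕ) (hM : ∀ i ∈ M, i + 1 < n)
    (us : List (Equiv.Perm (Fin n))) (ls : List (List ℕ))
    (hus : ∀ u ∈ us, u ∈ Subgroup.closure ((fun i => sT n i) '' M))
    (hred : List.Forall₂ (fun l u => IsReducedWord n l u) ls us)
    (gs : List (MvPolynomial (Fin n) ℤ)) (ds : List ℕ)
    (hhom : List.Forall₂ (fun g d => MvPolynomial.IsHomogeneous g d) gs ds)
    (gm : MvPolynomial (Fin n) ℤ) (dm : ℕ) (hgm : gm.IsHomogeneous dm)
    (hglen : gs.length + 1 = us.length)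
    (hsum : ds.sum + dm = (us.map invLen).sum)
    (h : MvPolynomial (Fin n) ℤ) (dh : ℕ) (hh : h.IsHomogeneous dh) (hdh : 0 < dh)
    (hinv : ∀ u ∈ Subgroup.closure ((fun i => sT n i) '' M), rename (⇑u) h = h)
    (g' : MvPolynomial (Fin n) ℤ) (d' : ℕ) (hg' : g'.IsHomogeneous d')
    (hdeg : dh + d' = dm) :
    nest n ls (gs ++ [gm + h * g']) = nest n ls (gs ++ [gm]) :=
  stmt7_general n M us ls hus hred gs ds hhom gm dm hglen hsum h dh hdh hinv g' d' hg' hdeg
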